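/- For every n ≥ 1, the expected number of elimination rounds in G(2,n), conditional on G(2,n) being strict-dominance solvable, equals E[I(2,n)] = 3 − ((n + 2^{n−1})/2^n) · √π · Γ(n)/Γ(n+1/2). -/

import Mathlib

open Finset Filter

noncomputable section

/-- Row action `i` is strictly dominated in the restricted game with Row actions `X`
and Column actions `Y`, for Row payoff matrix `R`. -/
def RowDomIn {m n : ℕ} (R : Fin m → Fin n → ℝ) (X : Finset (Fin m)) (Y : Finset (Fin n))
    (i : Fin m) : Prop :=
  ∃ i' ∈ X, ∀ j ∈ Y, R i j < R i' j

/-- Column action `j` is strictly dominated in the restricted game with Row actions `X`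
and Column actions `Y`, for Column payoff matrix `C`. -/
def ColDomIn {m n : ℕ} (C : Fin m → Fin n → ℝ) (X : Finset (Fin m)) (Y : Finset (Fin n))
    (j : Fin n) : Prop :=
  ∃ j' ∈ Y, ∀ i ∈ X, C i j < C i j'

open Classical in
/-- One round of iterated elimination: simultaneously delete every strictly dominated
action of both players in the current restricted game. -/
def elimStep {m n : ℕ} (R C : Fin m → Fin n → ℝ)
    (p : Finset (Fin m) × Finset (Fin n)) : Finset (Fin m) × Finset (Fin n) :=
  (p.1.filter fun i => ¬ RowDomIn R p.1 p.2 i,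
   p.2.filter fun j => ¬ ColDomIn C p.1 p.2 j)

/-- Surviving actions of the subgame `(p.1, p.2)` after iterated elimination of strictly
dominated actions (iterating `m + n` times surely reaches the fixed point). -/
def survivorsFrom {m n : ℕ} (R C : Fin m → Fin n → ℝ)
    (p : Finset (Fin m) × Finset (Fin n)) : Finset (Fin m) × Finset (Fin n) :=
  (elimStep R C)^[m + n] p

/-- The subgame `(p.1, p.2)` is strict-dominance solvable: exactly one action of each
player survives iterated elimination of strictly dominated actions. -/
def SolvableFrom {m n : ℕ} (R C : Fin m → Fin n → ℝ)
    (p : Finset (Fin m) × Finset (Fin n)) : Prop :=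
  (survivorsFrom R C p).1.card = 1 ∧ (survivorsFrom R C p).2.card = 1

/-- Surviving actions of the full game after iterated elimination. -/
def survivors {m n : ℕ} (R C : Fin m → Fin n → ℝ) : Finset (Fin m) × Finset (Fin n) :=
  survivorsFrom R C (Finset.univ, Finset.univ)

/-- The game is strict-dominance solvable. -/
def Solvable {m n : ℕ} (R C : Fin m → Fin n → ℝ) : Prop :=
  SolvableFrom R C (Finset.univ, Finset.univ)

/-- The number of rounds performed by the iterated elimination procedure:
the least `k` such that round `k + 1` deletes nothing more. -/
def elimRounds {m n : ℕ} (R C : Fin m → Fin n → ℝ) : ℕ :=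
  sInf {k | (elimStep R C)^[k + 1] (Finset.univ, Finset.univ)
          = (elimStep R C)^[k] (Finset.univ, Finset.univ)}

/-- Sample space of the random game `G(m,n)`: for each Column action an i.i.d. uniform
permutation giving Row's ordinal payoffs in that column, and for each Row action an
i.i.d. uniform permutation giving Column's ordinal payoffs in that row. -/
abbrev Omega (m n : ℕ) := (Fin n → Equiv.Perm (Fin m)) × (Fin m → Equiv.Perm (Fin n))

/-- Row's payoff matrix of the realized game. -/
def RPay {m n : ℕ} (ω : Omega m n) : Fin m → Fin n → ℝ := fun i j => ((ω.1 j) i : ℕ)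

/-- Column's payoff matrix of the realized game. -/
def CPay {m n : ℕ} (ω : Omega m n) : Fin m → Fin n → ℝ := fun i j => ((ω.2 i) j : ℕ)

/-- Probability of an event under the uniform distribution on `Omega m n`
(i.e. all `m + n` permutations uniform and mutually independent). -/
def Pr {m n : ℕ} (E : Set (Omega m n)) : ℝ :=
  (E.toFinite.toFinset.card : ℝ) / (Fintype.card (Omega m n) : ℝ)

open Classical in
/-- Number of Row actions that are not strictly dominated. -/
def UR {m n : ℕ} (ω : Omega m n) : ℕ :=
  (Finset.univ.filter fun i => ¬ RowDomIn (RPay ω) Finset.univ Finset.univ i).card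

open Classical in
/-- Number of Column actions that are not strictly dominated. -/
def UC {m n : ℕ} (ω : Omega m n) : ℕ :=
  (Finset.univ.filter fun j => ¬ ColDomIn (CPay ω) Finset.univ Finset.univ j).card

/-- Number of Row actions surviving iterated elimination. -/
def SR {m n : ℕ} (ω : Omega m n) : ℕ := (survivors (RPay ω) (CPay ω)).1.card

/-- Number of Column actions surviving iterated elimination. -/
def SC {m n : ℕ} (ω : Omega m n) : ℕ := (survivors (RPay ω) (CPay ω)).2.card

/-- The realized game is strict-dominance solvable. -/
def GameSolvable {m n : ℕ} (ω : Omega m n) : Prop := Solvable (RPay ω) (CPay ω)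

/-- Number of rounds of the iterated elimination procedure in the realized game. -/
def GameRounds {m n : ℕ} (ω : Omega m n) : ℕ := elimRounds (RPay ω) (CPay ω)

/-- `π(m,n)`: probability that the random game `G(m,n)` is strict-dominance solvable. -/
def probSolvable (m n : ℕ) : ℝ := Pr {ω : Omega m n | GameSolvable ω}

/-- Expected number of Column's strictly undominated actions, `E[U^C(m,n)]`. -/
def expUC (m n : ℕ) : ℝ :=
  (∑ ω : Omega m n, (UC ω : ℝ)) / (Fintype.card (Omega m n) : ℝ)

/-- Expected number of Column actions surviving iterated elimination, `E[S^C(m,n)]`. -/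
def expSC (m n : ℕ) : ℝ :=
  (∑ ω : Omega m n, (SC ω : ℝ)) / (Fintype.card (Omega m n) : ℝ)

open Classical in
/-- `E[I(m,n)]`: expected number of elimination rounds conditional on the game being
strict-dominance solvable. -/
def condExpRounds (m n : ℕ) : ℝ :=
  (∑ ω : Omega m n, if GameSolvable ω then (GameRounds ω : ℝ) else 0) /
    (∑ ω : Omega m n, if GameSolvable ω then (1 : ℝ) else 0)

/-- Unsigned Stirling numbers of the first kind. -/
def stirling1 : ℕ → ℕ → ℕ
  | 0, 0 => 1
  | 0, _ + 1 => 0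
  | _ + 1, 0 => 0
  | n + 1, k + 1 => n * stirling1 n (k + 1) + stirling1 n k

end

/-!
In `G(2,n)` Column's undominated actions form the Pareto front `F` of its two rankings, and
Column loses nothing more while Row keeps both actions. Row drops an action exactly when one row
wins every remaining column, so the game is solvable iff one row wins every column of `F`, and
then elimination takes `3 - [that row wins every column] - [#F = 1]` rounds.

For fixed Column rankings, the Row rankings that single out one row on `F` number
`2 · 2 ^ (n - #F)`, and `#F` is distributed like the number of right-to-left maxima of a uniform
permutation. Writing a permutation of `Fin (n + 1)` as its first value followed by a relabelled
permutation of `Fin n`, the first position is a new maximum exactly when that value is the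
largest; this gives `∑ 2 ^ (n - #records) = (2n - 1)‼` and `#{#records = 1} = (n - 1)!`, and
`Γ(n + 1/2) = (2n - 1)‼ √π / 2 ^ n` turns the resulting ratio into the formula.
-/

open Equiv Function Nat

section Settling

variable {α : Type*} (f : α → α)

inductive SettlesIn : α → ℕ → α → Prop
  | rest {x : α} : f x = x → SettlesIn x 0 x
  | move {x t : α} {r : ℕ} : f x ≠ x → SettlesIn (f x) r t → SettlesIn x (r + 1) t

variable {f}

namespace SettlesIn

theorem iterate_eq {x t : α} {r : ℕ} (h : SettlesIn f x r t) : f^[r] x = t := by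
  induction h with
  | rest => rfl
  | move _ _ ih => exact ih

theorem apply_eq {x t : α} {r : ℕ} (h : SettlesIn f x r t) : f t = t := by
  induction h with
  | rest hx => exact hx
  | move _ _ ih => exact ih

theorem iterate_eq_of_le {x t : α} {r N : ℕ} (h : SettlesIn f x r t) (hN : r ≤ N) :
    f^[N] x = t := by
  rw [← Nat.sub_add_cancel hN, iterate_add_apply, h.iterate_eq, iterate_fixed h.apply_eq]

theorem sInf_eq {x t : α} {r : ℕ} (h : SettlesIn f x r t) :
    sInf {k | f^[k + 1] x = f^[k] x} = r := by
  induction h with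
  | rest hx => exact Nat.sInf_eq_zero.2 (Or.inl hx)
  | @move x t r hx h ih =>
    have hpos : 1 ≤ sInf {k | f^[k + 1] x = f^[k] x} := by
      refine Nat.one_le_iff_ne_zero.2 fun h0 => ?_
      rcases Nat.sInf_eq_zero.1 h0 with h0 | h0
      · exact hx h0
      · have hr : f^[r + 1 + 1] x = f^[r + 1] x := by
          rw [iterate_succ_apply', iterate_succ_apply, h.iterate_eq, h.apply_eq]
        exact Set.eq_empty_iff_forall_notMem.1 h0 _ hr
    rw [← Nat.sInf_add hpos, ← ih]
    simp only [iterate_succ_apply]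

end SettlesIn

end Settling

section Dominance

open Finset

variable {m n : ℕ} {R C : Fin m → Fin n → ℝ}

theorem not_rowDomIn_singleton {Y : Finset (Fin n)} (hY : Y.Nonempty) (i : Fin m) :
    ¬ RowDomIn R {i} Y i := by
  rintro ⟨i', hi', hlt⟩
  obtain ⟨j, hj⟩ := hY
  rw [mem_singleton.1 hi'] at hlt
  exact lt_irrefl _ (hlt j hj)

theorem not_colDomIn_singleton {X : Finset (Fin m)} (hX : X.Nonempty) (j : Fin n) :
    ¬ ColDomIn C X {j} j := by
  rintro ⟨j', hj', hlt⟩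
  obtain ⟨i, hi⟩ := hX
  rw [mem_singleton.1 hj'] at hlt
  exact lt_irrefl _ (hlt i hi)

theorem ColDomIn.mono {X : Finset (Fin m)} {Y Y' : Finset (Fin n)} {j : Fin n}
    (h : ColDomIn C X Y j) (hY : Y ⊆ Y') : ColDomIn C X Y' j :=
  let ⟨j', hj', hlt⟩ := h
  ⟨j', hY hj', hlt⟩

open Classical

theorem filter_not_colDomIn_eq_self {X : Finset (Fin m)} {Y Y' : Finset (Fin n)}
    (hY : Y ⊆ Y'.filter fun j => ¬ ColDomIn C X Y' j) :
    Y.filter (fun j => ¬ ColDomIn C X Y j) = Y :=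
  filter_eq_self.2 fun _ hj hdom =>
    (mem_filter.1 (hY hj)).2 (hdom.mono (hY.trans (filter_subset _ _)))

theorem elimStep_singleton_singleton (i : Fin m) (j : Fin n) :
    elimStep R C ({i}, {j}) = ({i}, {j}) :=
  Prod.ext
    (filter_eq_self.2 fun _ hi' => by
      rw [mem_singleton.1 hi']; exact not_rowDomIn_singleton (singleton_nonempty j) i)
    (filter_eq_self.2 fun _ hj' => by
      rw [mem_singleton.1 hj']; exact not_colDomIn_singleton (singleton_nonempty i) j)

theorem exists_elimStep_singleton_eq {i : Fin m} (hC : Function.Injective (C i))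
    {Y : Finset (Fin n)} (hY : Y.Nonempty) :
    ∃ j ∈ Y, elimStep R C ({i}, Y) = ({i}, {j}) := by
  obtain ⟨j, hj, hmax⟩ := Y.exists_max_image (C i) hY
  refine ⟨j, hj, Prod.ext
    (filter_eq_self.2 fun _ hi' => by rw [mem_singleton.1 hi']; exact not_rowDomIn_singleton hY i)
    ?_⟩
  ext j'
  simp only [elimStep, ColDomIn, mem_singleton, forall_eq, mem_filter, not_exists, not_and,
    not_lt]
  constructor
  · rintro ⟨hj', hle⟩
    exact hC ((hmax j' hj').antisymm (hle j hj))
  · rintro rfl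
    exact ⟨hj, hmax⟩

theorem exists_settlesIn_singleton {i : Fin m} (hC : Function.Injective (C i))
    {Y : Finset (Fin n)} (hY : Y.Nonempty) :
    ∃ j, SettlesIn (elimStep R C) ({i}, Y) (if #Y = 1 then 0 else 1) ({i}, {j}) := by
  obtain ⟨j, hj, hstep⟩ := exists_elimStep_singleton_eq hC hY
  refine ⟨j, ?_⟩
  split_ifs with hcard
  · obtain ⟨j', rfl⟩ := card_eq_one.1 hcard
    obtain rfl := mem_singleton.1 hj
    exact .rest (elimStep_singleton_singleton _ _)
  · refine .move (fun h => hcard ?_) ?_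
    · rw [hstep, Prod.mk.injEq] at h
      rw [← h.2, card_singleton]
    · rw [hstep]
      exact .rest (elimStep_singleton_singleton i j)

end Dominance

section Payoffs

variable {m n : ℕ}

theorem RPay_lt_RPay (ω : Omega m n) {i i' : Fin m} {j : Fin n} :
    RPay ω i j < RPay ω i' j ↔ ω.1 j i < ω.1 j i' := by
  simp [RPay]

theorem CPay_lt_CPay (ω : Omega m n) {i : Fin m} {j j' : Fin n} :
    CPay ω i j < CPay ω i j' ↔ ω.2 i j < ω.2 i j' := by
  simp [CPay]

theorem CPay_injective (ω : Omega m n) (i : Fin m) : Function.Injective (CPay ω i) :=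
  fun _ _ h => (ω.2 i).injective (Fin.val_injective (by simpa [CPay] using h))

end Payoffs

section TwoRowGame

open Finset Classical

variable {n : ℕ}

theorem Equiv.Perm.eq_of_apply_eq_zero_of_fin_two {π π' : Perm (Fin 2)} {i : Fin 2}
    (h : π i = 0) (h' : π' i = 0) : π = π' := by
  revert π π' i; decide

theorem rowDomIn_univ_iff (ω : Omega 2 n) {Y : Finset (Fin n)} {i : Fin 2} :
    RowDomIn (RPay ω) univ Y i ↔ ∀ j ∈ Y, ω.1 j i = 0 := by
  constructor
  · rintro ⟨i', -, hlt⟩ j hj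
    have := (RPay_lt_RPay ω).1 (hlt j hj)
    omega
  · refine fun h => ⟨i.rev, mem_univ _, fun j hj => (RPay_lt_RPay ω).2 ?_⟩
    rw [h j hj, Fin.pos_iff_ne_zero, ← h j hj]
    exact (ω.1 j).injective.ne (by clear h; revert i; decide)

theorem filter_not_rowDomIn_univ_of_forall_eq (ω : Omega 2 n) {Y : Finset (Fin n)} (hY : Y.Nonempty)
    {c : Perm (Fin 2)} (hc : ∀ j ∈ Y, ω.1 j = c) :
    univ.filter (fun i => ¬ RowDomIn (RPay ω) univ Y i) = {c.symm 1} := by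
  obtain ⟨j₀, hj₀⟩ := hY
  ext i
  have hworse : (∀ j ∈ Y, ω.1 j i = 0) ↔ c i = 0 :=
    ⟨fun h => hc j₀ hj₀ ▸ h j₀ hj₀, fun h j hj => hc j hj ▸ h⟩
  simp only [mem_filter, mem_univ, true_and, mem_singleton, rowDomIn_univ_iff, hworse,
    Equiv.eq_symm_apply]
  omega

theorem filter_not_rowDomIn_univ_of_not_const (ω : Omega 2 n) {Y : Finset (Fin n)}
    (hY : ¬ ∃ c, ∀ j ∈ Y, ω.1 j = c) :
    univ.filter (fun i => ¬ RowDomIn (RPay ω) univ Y i) = univ :=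
  filter_eq_self.2 fun i _ hdom => hY ⟨swap 0 i, fun j hj =>
    Equiv.Perm.eq_of_apply_eq_zero_of_fin_two ((rowDomIn_univ_iff ω).1 hdom j hj)
      (swap_apply_right 0 i)⟩

def paretoFront (σ : Fin 2 → Perm (Fin n)) : Finset (Fin n) :=
  univ.filter fun j => ∀ j', σ 0 j < σ 0 j' → σ 1 j' < σ 1 j

theorem paretoFront_nonempty (hn : 1 ≤ n) (σ : Fin 2 → Perm (Fin n)) :
    (paretoFront σ).Nonempty := by
  obtain ⟨j, -, hmax⟩ := univ.exists_max_image (σ 0) ⟨⟨0, hn⟩, mem_univ _⟩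
  exact ⟨j, mem_filter.2 ⟨mem_univ _, fun j' hlt => absurd (hmax j' (mem_univ _)) hlt.not_ge⟩⟩

theorem filter_not_colDomIn_univ (ω : Omega 2 n) :
    univ.filter (fun j => ¬ ColDomIn (CPay ω) univ univ j) = paretoFront ω.2 := by
  ext j
  simp only [paretoFront, ColDomIn, mem_filter, mem_univ, true_and, Fin.forall_fin_two,
    CPay_lt_CPay, forall_const, not_exists, not_and]
  refine forall_congr' fun j' => imp_congr_right fun hlt => ?_
  have hne : ω.2 1 j' ≠ ω.2 1 j := (ω.2 1).injective.ne (by rintro rfl; exact lt_irrefl _ hlt)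
  exact ⟨fun h => lt_of_le_of_ne (not_lt.1 h) hne, fun h => h.not_gt⟩

theorem elimStep_univ_univ (ω : Omega 2 n) :
    elimStep (RPay ω) (CPay ω) (univ, univ) =
      (univ.filter fun i => ¬ RowDomIn (RPay ω) univ univ i, paretoFront ω.2) := by
  rw [← filter_not_colDomIn_univ]
  rfl

theorem elimStep_univ_paretoFront (ω : Omega 2 n) :
    elimStep (RPay ω) (CPay ω) (univ, paretoFront ω.2) =
      (univ.filter fun i => ¬ RowDomIn (RPay ω) univ (paretoFront ω.2) i, paretoFront ω.2) :=
  Prod.ext rfl (filter_not_colDomIn_eq_self (filter_not_colDomIn_univ ω).ge)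

theorem survivors_of_not_const (ω : Omega 2 n)
    (h : ¬ ∃ c, ∀ j ∈ paretoFront ω.2, ω.1 j = c) :
    survivors (RPay ω) (CPay ω) = (univ, paretoFront ω.2) := by
  have hall : ¬ ∃ c, ∀ j ∈ (univ : Finset (Fin n)), ω.1 j = c :=
    fun ⟨c, hc⟩ => h ⟨c, fun j _ => hc j (mem_univ j)⟩
  have hfix : elimStep (RPay ω) (CPay ω) (univ, paretoFront ω.2) = (univ, paretoFront ω.2) := by
    rw [elimStep_univ_paretoFront, filter_not_rowDomIn_univ_of_not_const ω h]
  rw [survivors, survivorsFrom, show 2 + n = 1 + n + 1 by omega, iterate_succ_apply,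
    elimStep_univ_univ, filter_not_rowDomIn_univ_of_not_const ω hall, iterate_fixed hfix]

theorem singleton_ne_univ_fin_two (i : Fin 2) : ({i} : Finset (Fin 2)) ≠ univ :=
  fun h => by simpa using congrArg card h

/-- When Column's Pareto front is won by a single row, Row first removes the other row (one
round, or two if some column off the front favours it) and then Column plays its best reply
(one more round unless the front is a single column). -/
theorem exists_settlesIn_of_const (hn : 1 ≤ n) (ω : Omega 2 n) {c : Perm (Fin 2)}
    (hc : ∀ j ∈ paretoFront ω.2, ω.1 j = c) :
    ∃ j, SettlesIn (elimStep (RPay ω) (CPay ω)) (univ, univ)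
      ((if ∃ c, ∀ j, ω.1 j = c then 1 else 2) + if #(paretoFront ω.2) = 1 then 0 else 1)
      ({c.symm 1}, {j}) := by
  have hF := paretoFront_nonempty hn ω.2
  obtain ⟨j, hj⟩ := exists_settlesIn_singleton (R := RPay ω) (CPay_injective ω (c.symm 1)) hF
  refine ⟨j, ?_⟩
  by_cases hA : ∃ c, ∀ j, ω.1 j = c
  · obtain ⟨c', hc'⟩ := hA
    have hcc' : c' = c := by
      obtain ⟨j₀, hj₀⟩ := hF
      rw [← hc j₀ hj₀, hc' j₀]
    have h1 : elimStep (RPay ω) (CPay ω) (univ, univ) = ({c.symm 1}, paretoFront ω.2) := by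
      rw [elimStep_univ_univ, filter_not_rowDomIn_univ_of_forall_eq ω ⟨⟨0, hn⟩, mem_univ _⟩
        fun j _ => hcc' ▸ hc' j]
    rw [if_pos ⟨c', hc'⟩, add_comm]
    refine .move ?_ (h1 ▸ hj)
    rw [h1]
    exact fun h => singleton_ne_univ_fin_two _ (congrArg Prod.fst h)
  · have hall : ¬ ∃ c, ∀ j ∈ (univ : Finset (Fin n)), ω.1 j = c :=
      fun ⟨c, hc⟩ => hA ⟨c, fun j => hc j (mem_univ j)⟩
    have h1 : elimStep (RPay ω) (CPay ω) (univ, univ) = (univ, paretoFront ω.2) := by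
      rw [elimStep_univ_univ, filter_not_rowDomIn_univ_of_not_const ω hall]
    have h2 : elimStep (RPay ω) (CPay ω) (univ, paretoFront ω.2) =
        ({c.symm 1}, paretoFront ω.2) := by
      rw [elimStep_univ_paretoFront, filter_not_rowDomIn_univ_of_forall_eq ω hF hc]
    rw [if_neg hA, show ∀ k, 2 + k = k + 1 + 1 from fun k => by omega]
    refine .move ?_ (h1 ▸ .move ?_ (h2 ▸ hj))
    · rw [h1, Ne, Prod.mk.injEq]
      exact fun h => hA ⟨c, fun j => hc j (h.2 ▸ mem_univ j)⟩
    · rw [h2]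
      exact fun h => singleton_ne_univ_fin_two _ (congrArg Prod.fst h)

theorem gameSolvable_iff (hn : 1 ≤ n) (ω : Omega 2 n) :
    GameSolvable ω ↔ ∃ c, ∀ j ∈ paretoFront ω.2, ω.1 j = c := by
  show (survivors (RPay ω) (CPay ω)).1.card = 1 ∧ (survivors (RPay ω) (CPay ω)).2.card = 1 ↔ _
  refine ⟨fun hsolv => ?_, fun ⟨c, hc⟩ => ?_⟩
  · by_contra h
    have hrows := hsolv.1
    rw [survivors_of_not_const ω h] at hrows
    simp at hrows
  · obtain ⟨j, hj⟩ := exists_settlesIn_of_const hn ω hc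
    have hsurv : survivors (RPay ω) (CPay ω) = ({c.symm 1}, {j}) :=
      hj.iterate_eq_of_le (by split_ifs <;> omega)
    exact ⟨by rw [hsurv, card_singleton], by rw [hsurv, card_singleton]⟩

theorem gameRounds_eq (hn : 1 ≤ n) (ω : Omega 2 n) (h : ∃ c, ∀ j ∈ paretoFront ω.2, ω.1 j = c) :
    GameRounds ω =
      (if ∃ c, ∀ j, ω.1 j = c then 1 else 2) + if #(paretoFront ω.2) = 1 then 0 else 1 := by
  obtain ⟨c, hc⟩ := h
  obtain ⟨j, hj⟩ := exists_settlesIn_of_const hn ω hc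
  exact hj.sInf_eq

end TwoRowGame

section Records

open Finset

variable {n : ℕ}

/-- Right-to-left maxima. -/
def records (τ : Perm (Fin n)) : Finset (Fin n) :=
  univ.filter fun a => ∀ b, a < b → τ b < τ a

theorem mem_records {τ : Perm (Fin n)} {a : Fin n} : a ∈ records τ ↔ ∀ b, a < b → τ b < τ a := by
  simp [records]

theorem card_records_le (τ : Perm (Fin n)) : #(records τ) ≤ n :=
  (card_filter_le _ _).trans (by simp)

theorem last_mem_records (τ : Perm (Fin (n + 1))) : Fin.last n ∈ records τ :=
  mem_records.2 fun b hb => absurd hb (Fin.le_last b).not_gt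

theorem map_paretoFront (σ : Fin 2 → Perm (Fin n)) :
    (paretoFront σ).map (σ 0).toEmbedding = records (σ 1 * (σ 0)⁻¹) := by
  ext a
  obtain ⟨j, rfl⟩ := (σ 0).surjective a
  simp only [paretoFront, mem_map_equiv, mem_filter, mem_univ, true_and, mem_records,
    Perm.mul_apply, symm_apply_apply]
  refine ⟨fun h b hb => ?_, fun h j' hj' => by simpa using h _ hj'⟩
  obtain ⟨j', rfl⟩ := (σ 0).surjective b
  simpa using h j' hb

theorem card_paretoFront (σ : Fin 2 → Perm (Fin n)) :
    #(paretoFront σ) = #(records (σ 1 * (σ 0)⁻¹)) := by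
  rw [← map_paretoFront, card_map]

theorem sum_card_paretoFront {M : Type*} [AddCommMonoid M] (g : ℕ → M) :
    ∑ σ : Fin 2 → Perm (Fin n), g #(paretoFront σ) = n ! • ∑ τ : Perm (Fin n), g #(records τ) := by
  rw [Fintype.sum_equiv (piFinTwoEquiv fun _ => Perm (Fin n)) _
    (fun q => g #(records (q.2 * q.1⁻¹))) fun σ => by rw [card_paretoFront]; rfl,
    Fintype.sum_prod_type]
  have hinner (α : Perm (Fin n)) :
      ∑ β : Perm (Fin n), g #(records (β * α⁻¹)) = ∑ τ : Perm (Fin n), g #(records τ) :=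
    Fintype.sum_equiv (Equiv.mulRight α⁻¹) _ _ fun _ => rfl
  rw [sum_congr rfl fun α _ => hinner α, sum_const, Finset.card_univ, Fintype.card_perm,
    Fintype.card_fin]

def consPerm (p : Fin (n + 1)) (σ : Perm (Fin n)) : Perm (Fin (n + 1)) :=
  (finSuccEquiv n).trans (σ.optionCongr.trans (finSuccEquiv' p).symm)

@[simp]
theorem consPerm_zero (p : Fin (n + 1)) (σ : Perm (Fin n)) : consPerm p σ 0 = p := by
  simp [consPerm]

@[simp]
theorem consPerm_succ (p : Fin (n + 1)) (σ : Perm (Fin n)) (a : Fin n) :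
    consPerm p σ a.succ = p.succAbove (σ a) := by
  simp [consPerm]

theorem consPerm_bijective :
    Function.Bijective fun q : Fin (n + 1) × Perm (Fin n) => consPerm q.1 q.2 := by
  refine (Fintype.bijective_iff_injective_and_card _).2 ⟨?_, by
    simp [Fintype.card_perm, Nat.factorial_succ]⟩
  rintro ⟨p, σ⟩ ⟨p', σ'⟩ h
  obtain rfl : p = p' := by simpa using congrArg (· 0) h
  refine Prod.ext rfl (Equiv.ext fun a => Fin.succAbove_right_injective (p := p) ?_)
  simpa using congrArg (· a.succ) h

theorem zero_mem_records_consPerm_iff {p : Fin (n + 1)} {σ : Perm (Fin n)} :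
    0 ∈ records (consPerm p σ) ↔ p = Fin.last n := by
  refine ⟨fun h => ?_, fun hp => mem_records.2 fun b hb => ?_⟩
  · by_contra hne
    obtain ⟨y, hy⟩ := Fin.exists_succAbove_eq (Ne.symm hne)
    have := mem_records.1 h (σ.symm y).succ (Fin.succ_pos _)
    simp only [consPerm_succ, apply_symm_apply, hy, consPerm_zero] at this
    exact this.not_ge (Fin.le_last p)
  · obtain ⟨b, rfl⟩ := Fin.exists_succ_eq.2 hb.ne'
    simp [hp, Fin.castSucc_lt_last]

theorem succ_mem_records_consPerm_iff {p : Fin (n + 1)} {σ : Perm (Fin n)} {a : Fin n} :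
    a.succ ∈ records (consPerm p σ) ↔ a ∈ records σ := by
  simp only [mem_records, Fin.forall_fin_succ, Fin.succ_lt_succ_iff, consPerm_succ,
    Fin.succAbove_lt_succAbove_iff, (Fin.succ_pos a).not_gt, false_imp_iff, true_and]

theorem card_records_consPerm (p : Fin (n + 1)) (σ : Perm (Fin n)) :
    #(records (consPerm p σ)) = #(records σ) + if p = Fin.last n then 1 else 0 := by
  have hcard {k : ℕ} (τ : Perm (Fin k)) :
      #(records τ) = ∑ a, if a ∈ records τ then 1 else 0 := by
    rw [sum_ite_mem, univ_inter, card_eq_sum_ones]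
  rw [hcard, hcard σ, Fin.sum_univ_succ, add_comm]
  simp only [zero_mem_records_consPerm_iff, succ_mem_records_consPerm_iff]

/-- Inserting a value in front of a permutation creates a new record exactly when the value is
the largest one. -/
theorem sum_records_succ {M : Type*} [AddCommMonoid M] (g : ℕ → M) :
    ∑ τ : Perm (Fin (n + 1)), g #(records τ) =
      ∑ σ : Perm (Fin n), g (#(records σ) + 1) + n • ∑ σ : Perm (Fin n), g #(records σ) := by
  rw [← Fintype.sum_bijective _ consPerm_bijective _ (fun τ => g #(records τ)) fun _ => rfl,
    Fintype.sum_prod_type, Fin.sum_univ_castSucc, add_comm]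
  simp [card_records_consPerm]

theorem Nat.doubleFactorial_two_mul_succ_sub_one (n : ℕ) :
    (2 * (n + 1) - 1)‼ = (2 * n + 1) * (2 * n - 1)‼ := by
  rw [show 2 * (n + 1) - 1 = 2 * n + 1 by omega, Nat.doubleFactorial_add_one]

theorem sum_two_pow_sub_card_records (n : ℕ) :
    ∑ τ : Perm (Fin n), 2 ^ (n - #(records τ)) = (2 * n - 1)‼ := by
  induction n with
  | zero => simp
  | succ n ih =>
    have hpow (σ : Perm (Fin n)) : 2 ^ (n + 1 - #(records σ)) = 2 * 2 ^ (n - #(records σ)) := by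
      rw [← pow_succ', Nat.sub_add_comm (card_records_le σ)]
    have := sum_records_succ (n := n) fun r => 2 ^ (n + 1 - r)
    simp only [Nat.add_sub_add_right, hpow, ← mul_sum, ih, smul_eq_mul] at this
    rw [this, Nat.doubleFactorial_two_mul_succ_sub_one]
    ring

theorem card_records_eq_one (n : ℕ) : #{τ : Perm (Fin (n + 1)) | #(records τ) = 1} = n ! := by
  rw [card_filter]
  induction n with
  | zero =>
    have := sum_records_succ (n := 0) fun r => if r = 1 then 1 else 0
    simp only [eq_empty_of_isEmpty, card_empty] at this
    rw [this]
    simp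
  | succ n ih =>
    have hpos (σ : Perm (Fin (n + 1))) : #(records σ) + 1 ≠ 1 := by
      simpa using nonempty_iff_ne_empty.1 ⟨_, last_mem_records σ⟩
    have := sum_records_succ (n := n + 1) fun r => if r = 1 then 1 else 0
    simp only [hpos, if_false, sum_const_zero, ih, smul_eq_mul, zero_add] at this
    rw [this, Nat.factorial_succ]

end Records

section Counting

open Finset

theorem card_filter_exists_forall_mem_eq {ι α : Type*} [Fintype ι] [DecidableEq ι] [Fintype α]
    [DecidableEq α] {F : Finset ι} (hF : F.Nonempty) :
    #{b : ι → α | ∃ c, ∀ j ∈ F, b j = c} =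
      Fintype.card α * Fintype.card α ^ (Fintype.card ι - #F) := by
  have hunion : ({b : ι → α | ∃ c, ∀ j ∈ F, b j = c} : Finset (ι → α)) =
      univ.biUnion fun c => Fintype.piFinset fun j => if j ∈ F then {c} else univ := by
    ext b
    simp only [mem_filter, mem_univ, true_and, mem_biUnion, Fintype.mem_piFinset]
    refine exists_congr fun c => forall_congr' fun j => ?_
    split_ifs with hj <;> simp [hj]
  rw [hunion, card_biUnion]
  · simp only [Fintype.card_piFinset, apply_ite card, card_singleton, prod_ite, prod_const_one,
      one_mul, prod_const, filter_notMem_eq_sdiff, ← compl_eq_univ_sdiff, card_compl, sum_const,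
      Finset.card_univ, smul_eq_mul]
  · intro c _ c' _ hne
    obtain ⟨j, hj⟩ := hF
    refine disjoint_left.2 fun b hb hb' => hne ?_
    have h := Fintype.mem_piFinset.1 hb j
    have h' := Fintype.mem_piFinset.1 hb' j
    simp only [if_pos hj, mem_singleton] at h h'
    exact h.symm.trans h'

variable {n : ℕ}

theorem card_filter_omega (P : Omega 2 n → Prop) [DecidablePred P] :
    #{ω | P ω} = ∑ σ : Fin 2 → Perm (Fin n), #{b : Fin n → Perm (Fin 2) | P (b, σ)} := by
  simp only [card_filter]
  rw [Fintype.sum_prod_type, sum_comm]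

theorem card_omega_fst_const_on_paretoFront (hn : 1 ≤ n) :
    #{ω : Omega 2 n | ∃ c, ∀ j ∈ paretoFront ω.2, ω.1 j = c} = 2 * n ! * (2 * n - 1)‼ := by
  have hrow (σ : Fin 2 → Perm (Fin n)) :
      #{b : Fin n → Perm (Fin 2) | ∃ c, ∀ j ∈ paretoFront σ, b j = c} =
        2 * 2 ^ (n - #(paretoFront σ)) := by
    convert card_filter_exists_forall_mem_eq (α := Perm (Fin 2)) (paretoFront_nonempty hn σ)
      using 3 <;> simp [Fintype.card_perm]
  rw [card_filter_omega, sum_congr rfl fun σ _ => hrow σ,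
    sum_card_paretoFront fun k => 2 * 2 ^ (n - k), ← mul_sum, sum_two_pow_sub_card_records,
    smul_eq_mul]
  ring

theorem card_omega_fst_const (hn : 1 ≤ n) :
    #{ω : Omega 2 n | ∃ c, ∀ j, ω.1 j = c} = 2 * n ! ^ 2 := by
  have h : #{b : Fin n → Perm (Fin 2) | ∃ c, ∀ j, b j = c} = 2 := by
    convert card_filter_exists_forall_mem_eq (ι := Fin n) (α := Perm (Fin 2)) (F := univ)
      ⟨⟨0, hn⟩, mem_univ _⟩ using 3 <;> simp [Fintype.card_perm]
  rw [card_filter_omega]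
  simp only [h, sum_const, Finset.card_univ, Fintype.card_fun, Fintype.card_perm, Fintype.card_fin,
    smul_eq_mul]
  ring

theorem card_omega_paretoFront_eq_one (hn : 1 ≤ n) :
    #{ω : Omega 2 n | #(paretoFront ω.2) = 1} = 2 ^ n * (n ! * (n - 1)!) := by
  obtain ⟨k, rfl⟩ : ∃ k, n = k + 1 := ⟨n - 1, by omega⟩
  rw [card_filter_omega]
  simp only [filter_const, apply_ite card, Finset.card_univ, Fintype.card_fun, Fintype.card_perm,
    Fintype.card_fin, Nat.factorial_two, card_empty]
  rw [sum_card_paretoFront (fun r => if r = 1 then 2 ^ (k + 1) else 0), ← sum_filter, sum_const,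
    card_records_eq_one, smul_eq_mul, smul_eq_mul, Nat.add_sub_cancel]
  ring

open Classical in
theorem gameRounds_add_indicators (hn : 1 ≤ n) (ω : Omega 2 n) :
    (if GameSolvable ω then GameRounds ω else 0) + (if ∃ c, ∀ j, ω.1 j = c then 1 else 0) +
      (if #(paretoFront ω.2) = 1 then 1 else 0) = 3 * if GameSolvable ω then 1 else 0 := by
  by_cases hs : GameSolvable ω
  · rw [gameRounds_eq hn ω ((gameSolvable_iff hn ω).1 hs)]
    split_ifs <;> rfl
  · have hA : ¬ ∃ c, ∀ j, ω.1 j = c :=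
      fun ⟨c, hc⟩ => hs ((gameSolvable_iff hn ω).2 ⟨c, fun j _ => hc j⟩)
    have hB : #(paretoFront ω.2) ≠ 1 := fun h => hs <| (gameSolvable_iff hn ω).2 <| by
      obtain ⟨j₀, hj₀⟩ := card_eq_one.1 h
      exact ⟨ω.1 j₀, fun j hj => by rw [hj₀, mem_singleton] at hj; rw [hj]⟩
    simp [hs, hA, hB]

open Classical in
theorem sum_gameRounds_add_card (hn : 1 ≤ n) :
    ∑ ω : Omega 2 n, (if GameSolvable ω then GameRounds ω else 0) +
        #{ω : Omega 2 n | ∃ c, ∀ j, ω.1 j = c} + #{ω : Omega 2 n | #(paretoFront ω.2) = 1} =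
      3 * #{ω : Omega 2 n | GameSolvable ω} := by
  simp only [card_filter, ← sum_add_distrib, mul_sum]
  exact sum_congr rfl fun ω _ => gameRounds_add_indicators hn ω

open Classical in
theorem condExpRounds_two (hn : 1 ≤ n) :
    condExpRounds 2 n =
      3 - ((2 * n ! ^ 2 + 2 ^ n * (n ! * (n - 1)!) : ℕ) : ℝ) / (2 * n ! * (2 * n - 1)‼ : ℕ) := by
  have hsolv : #{ω : Omega 2 n | GameSolvable ω} = 2 * n ! * (2 * n - 1)‼ := by
    rw [filter_congr fun ω _ => gameSolvable_iff hn ω, card_omega_fst_const_on_paretoFront hn]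
  have hsum := sum_gameRounds_add_card hn
  rw [card_omega_fst_const hn, card_omega_paretoFront_eq_one hn, hsolv, add_assoc] at hsum
  rw [condExpRounds, sum_boole, hsolv, eq_sub_iff_add_eq, ← add_div, div_eq_iff (by positivity)]
  exact_mod_cast hsum

end Counting

/-- For every `n ≥ 1`, the expected number of elimination rounds in `G(2,n)`,
conditional on strict-dominance solvability, equals
`3 − ((n + 2^(n−1))/2^n) · √π · Γ(n)/Γ(n+1/2)`. -/
theorem stmt5 (n : ℕ) (hn : 1 ≤ n) :
    condExpRounds 2 n
      = 3 - (((n : ℝ) + 2 ^ (n - 1)) / 2 ^ n) * Real.sqrt Real.pi *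
          (Real.Gamma (n : ℝ) / Real.Gamma ((n : ℝ) + 1 / 2)) := by
  obtain ⟨k, rfl⟩ : ∃ k, n = k + 1 := ⟨n - 1, by omega⟩
  rw [condExpRounds_two hn, Real.Gamma_nat_add_half, Nat.cast_succ, Real.Gamma_nat_eq_factorial,
    Nat.add_sub_cancel, Nat.factorial_succ]
  push_cast
  field_simp
  ring
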